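/- arXiv:2407.19791 — 4 statements merged into one kernel-verified Lean document; each statement's English description precedes it below -/
import Mathlib

section
/- If a function f : Z_p^d → M has a Mahler expansion f(x) = Σ_n a_n binom(x,n) with val_M(a_n) → ∞, then inf over x ∈ Z_p^d of val_M(f(x)) equals inf over n ∈ Z_{≥0}^d of val_M(a_n). -/
open Finset Filter
open scoped ENNReal NNReal

variable {p : ℕ} [Fact p.Prime]

/-- The binomial coefficient `binom(x,n)` of a `p`-adic integer. -/
noncomputable def pchoose (x : ℤ_[p]) (n : ℕ) : ℤ_[p] :=
  if h : ‖(∏ i ∈ Finset.range n, ((x : ℚ_[p]) - (i : ℚ_[p]))) / (n.factorial : ℚ_[p])‖ ≤ 1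
  then ⟨_, h⟩ else 0

/-- The multivariate binomial coefficient `binom(x,n) = ∏ binom(x_k, n_k)`. -/
noncomputable def pchoosePi {d : ℕ} (x : Fin d → ℤ_[p]) (n : Fin d → ℕ) : ℤ_[p] :=
  ∏ k, pchoose (x k) (n k)

/-- The difference operator in direction `y`. -/
noncomputable def dshift {d : ℕ} {M : Type*} [AddCommGroup M] (y : Fin d → ℤ_[p])
    (f : (Fin d → ℤ_[p]) → M) : (Fin d → ℤ_[p]) → M :=
  fun x => f (x + y) - f x

/-- The difference operator `Δ_i` in the `i`-th coordinate direction. -/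
noncomputable def ddelta {d : ℕ} {M : Type*} [AddCommGroup M] (i : Fin d) :
    ((Fin d → ℤ_[p]) → M) → ((Fin d → ℤ_[p]) → M) :=
  dshift (Pi.single i 1)

/-- The iterated multivariate difference operator `Δ^n = Δ_1^{n_1} ∘ ... ∘ Δ_d^{n_d}`. -/
noncomputable def dpow {d : ℕ} {M : Type*} [AddCommGroup M] (n : Fin d → ℕ)
    (f : (Fin d → ℤ_[p]) → M) : (Fin d → ℤ_[p]) → M :=
  ((List.finRange d).foldr (fun i g => (ddelta i)^[n i] ∘ g) id) f

/-- The `n`-th Mahler coefficient `a_n(f) = Δ^n(f)(0)` of a multivariable function. -/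
noncomputable def mahlerCoeff {d : ℕ} {M : Type*} [AddCommGroup M]
    (f : (Fin d → ℤ_[p]) → M) (n : Fin d → ℕ) : M :=
  dpow n f 0

/- The expansion at a point of `ℕ^d` is a finite sum whose top coefficient is `1`, so the
coefficients are recovered from the values on `ℕ^d` by inverting a unitriangular system
over `ℤ_[p]`; the ultrametric inequality, by induction along the pointwise order of `ℕ^d`,
bounds `‖a n‖` by the values. Conversely every term
of the expansion has norm at most `‖a n‖`, since `|binom(x,n)|_p ≤ 1`. -/

lemma coe_pchoose_of_norm_le {x : ℤ_[p]} {n : ℕ}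
    (h : ‖(∏ i ∈ range n, ((x : ℚ_[p]) - (i : ℚ_[p]))) / (n.factorial : ℚ_[p])‖ ≤ 1) :
    (pchoose x n : ℚ_[p]) = (∏ i ∈ range n, ((x : ℚ_[p]) - (i : ℚ_[p]))) / n.factorial := by
  unfold pchoose
  exact congrArg Subtype.val (dif_pos h)

lemma pchoose_natCast (m n : ℕ) : pchoose (m : ℤ_[p]) n = (m.choose n : ℤ_[p]) := by
  have hq : (∏ i ∈ range n, (((m : ℤ_[p]) : ℚ_[p]) - (i : ℚ_[p]))) / (n.factorial : ℚ_[p])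
      = (m.choose n : ℚ_[p]) := by
    rw [PadicInt.coe_natCast, ← descPochhammer_eval_eq_prod_range,
      descPochhammer_eval_eq_descFactorial, Nat.descFactorial_eq_factorial_mul_choose,
      Nat.cast_mul, mul_div_cancel_left₀ _ (Nat.cast_ne_zero.mpr n.factorial_ne_zero)]
  have hle := (congrArg norm hq).trans_le (Padic.norm_int_le_one (m.choose n : ℤ))
  exact PadicInt.ext ((coe_pchoose_of_norm_le hle).trans (hq.trans (PadicInt.coe_natCast _).symm))

lemma pchoosePi_natCast {d : ℕ} (m n : Fin d → ℕ) :
    pchoosePi (fun k => (m k : ℤ_[p])) n = ((∏ k, (m k).choose (n k) : ℕ) : ℤ_[p]) := by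
  rw [pchoosePi, Nat.cast_prod]
  exact prod_congr rfl fun k _ => pchoose_natCast (m k) (n k)

lemma pchoosePi_natCast_self {d : ℕ} (m : Fin d → ℕ) :
    pchoosePi (fun k => (m k : ℤ_[p])) m = 1 := by
  simp [pchoosePi_natCast]

lemma hasSum_pchoosePi_natCast_smul {d : ℕ} {M : Type*} [AddCommMonoid M] [TopologicalSpace M]
    [Module ℤ_[p] M]
    (a : (Fin d → ℕ) → M) (m : Fin d → ℕ) :
    HasSum (fun n => pchoosePi (fun k => (m k : ℤ_[p])) n • a n)
      (∑ n ∈ Iic m, pchoosePi (fun k => (m k : ℤ_[p])) n • a n) := by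
  refine hasSum_sum_of_ne_finset_zero fun n hn => ?_
  obtain ⟨k, hk⟩ : ∃ k, m k < n k := by simpa [Pi.le_def] using hn
  rw [pchoosePi_natCast, prod_eq_zero (mem_univ k) (Nat.choose_eq_zero_of_lt hk), Nat.cast_zero,
    zero_smul]

lemma ENNReal.iSup_coe_le_iSup_coe_of_forall_le {ι κ : Type*} {g : ι → ℝ≥0} {h : κ → ℝ≥0}
    (H : ∀ C : ℝ≥0, (∀ i, g i ≤ C) → ∀ j, h j ≤ C) :
    ⨆ j, (h j : ℝ≥0∞) ≤ ⨆ i, (g i : ℝ≥0∞) := by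
  refine iSup_le fun j => ?_
  obtain htop | hfin := eq_or_ne (⨆ i, (g i : ℝ≥0∞)) ⊤
  · exact htop ▸ le_top
  have hg : ∀ i, g i ≤ (⨆ i, (g i : ℝ≥0∞)).toNNReal := fun i =>
    ENNReal.le_toNNReal_of_coe_le (le_iSup (fun i => (g i : ℝ≥0∞)) i) hfin
  exact (ENNReal.coe_le_coe.2 (H _ hg j)).trans ENNReal.coe_toNNReal_le_self

section MahlerExpansion

variable {d : ℕ} {M : Type*} [NormedAddCommGroup M] [Module ℤ_[p] M] [IsBoundedSMul ℤ_[p] M]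

lemma nnnorm_pchoosePi_smul_le (x : Fin d → ℤ_[p]) (n : Fin d → ℕ) (m : M) :
    ‖pchoosePi x n • m‖₊ ≤ ‖m‖₊ :=
  (nnnorm_smul_le _ _).trans <|
    mul_le_of_le_one_left zero_le (by exact_mod_cast PadicInt.norm_le_one _)

variable [IsUltrametricDist M] {f : (Fin d → ℤ_[p]) → M} {a : (Fin d → ℕ) → M} {C : ℝ≥0}

lemma nnnorm_le_of_forall_coeff_le (hsum : ∀ x, HasSum (fun n => pchoosePi x n • a n) (f x))
    (hC : ∀ n, ‖a n‖₊ ≤ C) (x : Fin d → ℤ_[p]) : ‖f x‖₊ ≤ C := by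
  rw [← (hsum x).tsum_eq]
  exact IsUltrametricDist.nnnorm_tsum_le_of_forall_le fun n =>
    (nnnorm_pchoosePi_smul_le x n (a n)).trans (hC n)

lemma coeff_nnnorm_le_of_forall_natCast_le
    (hsum : ∀ x, HasSum (fun n => pchoosePi x n • a n) (f x))
    (hC : ∀ m : Fin d → ℕ, ‖f (fun k => (m k : ℤ_[p]))‖₊ ≤ C) (n : Fin d → ℕ) :
    ‖a n‖₊ ≤ C := by
  induction n using WellFoundedLT.induction with
  | _ m IH =>
    set x : Fin d → ℤ_[p] := fun k => (m k : ℤ_[p])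
    have hfx : f x = a m + ∑ n ∈ Iio m, pchoosePi x n • a n := by
      rw [(hsum x).unique (hasSum_pchoosePi_natCast_smul a m), ← Iio_insert,
        sum_insert notMem_Iio_self, pchoosePi_natCast_self, one_smul]
    set r := ∑ n ∈ Iio m, pchoosePi x n • a n
    have hr : ‖r‖₊ ≤ C := IsUltrametricDist.nnnorm_sum_le_of_forall_le fun n hn =>
      (nnnorm_pchoosePi_smul_le x n (a n)).trans (IH n (mem_Iio.1 hn))
    calc ‖a m‖₊ = ‖f x + -r‖₊ := by rw [hfx, add_neg_cancel_right]
      _ ≤ max ‖f x‖₊ ‖r‖₊ := by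
        simpa only [nnnorm_neg] using IsUltrametricDist.nnnorm_add_le_max (f x) (-r)
      _ ≤ C := max_le (hC m) hr

end MahlerExpansion

theorem stmt5_general {d : ℕ} {M : Type*} [NormedAddCommGroup M] [Module ℤ_[p] M]
    [IsBoundedSMul ℤ_[p] M]
    (hna : ∀ a b : M, ‖a + b‖ ≤ max ‖a‖ ‖b‖)
    (f : (Fin d → ℤ_[p]) → M) (a : (Fin d → ℕ) → M)
    (hsum : ∀ x, HasSum (fun n => pchoosePi x n • a n) (f x)) :
    (⨆ x, (‖f x‖₊ : ℝ≥0∞)) = ⨆ n, (‖a n‖₊ : ℝ≥0∞) := by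
  have := IsUltrametricDist.isUltrametricDist_of_forall_norm_add_le_max_norm hna
  exact le_antisymm
    (ENNReal.iSup_coe_le_iSup_coe_of_forall_le fun _ hC => nnnorm_le_of_forall_coeff_le hsum hC)
    (ENNReal.iSup_coe_le_iSup_coe_of_forall_le fun _ hC =>
      coeff_nnnorm_le_of_forall_natCast_le hsum fun m => hC _)

theorem stmt5 {d : ℕ} {M : Type*} [NormedAddCommGroup M] [Module ℤ_[p] M]
    [IsBoundedSMul ℤ_[p] M]
    (hna : ∀ a b : M, ‖a + b‖ ≤ max ‖a‖ ‖b‖)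
    (f : (Fin d → ℤ_[p]) → M) (a : (Fin d → ℕ) → M)
    (ha : Tendsto (fun n => ‖a n‖) cofinite (nhds 0))
    (hsum : ∀ x, HasSum (fun n => pchoosePi x n • a n) (f x)) :
    (⨆ x, (‖f x‖₊ : ℝ≥0∞)) = ⨆ n, (‖a n‖₊ : ℝ≥0∞) :=
  stmt5_general hna f a hsum
end

section
/- The space C^{λ-an}(Z_p^d, M) of functions whose Mahler coefficients satisfy val_M(a_n(f)) − p^λ|n| → ∞ is stable under the shift operators sh_z for every z ∈ Z_p^d, and each sh_z acts on it as an isometry for the valuation val_λ(f) = inf_n (val_M(a_n(f)) − ⌊p^λ n⌋). -/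
open Finset Filter
open scoped ENNReal NNReal

variable {p : ℕ} [Fact p.Prime]

/-- Membership in `C^{λ-an}(ℤ_p^d, M)`: `f` is continuous and its Mahler coefficients
satisfy `val(a_n) - p^λ |n| → ∞`, i.e. `‖a_n‖ · p^{p^λ |n|} → 0`. -/
noncomputable def CondLa {d : ℕ} {M : Type*} [NormedAddCommGroup M] (p : ℕ) [Fact p.Prime]
    (lam : ℝ) (f : (Fin d → ℤ_[p]) → M) : Prop :=
  Continuous f ∧
    Tendsto (fun n : Fin d → ℕ =>
        ‖mahlerCoeff f n‖ * (p : ℝ) ^ ((p : ℝ) ^ lam * (∑ i, (n i : ℝ))))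
      cofinite (nhds 0)

/-- The multiplicative avatar `p^{-val_λ(f)}` of the valuation
`val_λ(f) = inf_n (val(a_n(f)) - ⌊p^λ n⌋)`, where `⌊p^λ n⌋ = Σ_i ⌊p^λ n_i⌋`. -/
noncomputable def Rlam {d : ℕ} {M : Type*} [NormedAddCommGroup M] (p : ℕ) [Fact p.Prime]
    (lam : ℝ) (f : (Fin d → ℤ_[p]) → M) : ℝ≥0∞ :=
  ⨆ n : Fin d → ℕ,
    ENNReal.ofReal (‖mahlerCoeff f n‖ * (p : ℝ) ^ ((∑ i, ⌊(p : ℝ) ^ lam * (n i : ℝ)⌋) : ℤ))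

/-!
The `n`-th Mahler coefficient of `x ↦ f (z + x)` is `Δⁿ f (z)`, and since the `Δᵢ` commute the
Mahler coefficients of `Δⁿ f` are the `a_{m+n}(f)`. For any continuous `g`, the identity
`g (eᵢ + x) = g x + Δᵢ g x` and the ultrametric inequality give `‖g x‖ ≤ supₘ ‖aₘ(g)‖` on the additive
monoid spanned by the unit vectors `eᵢ`, which is `ℕ^d`, dense in `ℤ_p^d`; so the bound holds
everywhere. Hence `‖aₙ(sh_z f)‖ ≤ sup_{m ≥ n} ‖aₘ(f)‖`, and as both weights `p^{p^λ |n|}` and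
`p^{⌊p^λ n⌋}` grow with `n`, a shift can only improve the decay of the weighted coefficients and the
valuation `val_λ`. Applying this to `sh_{-z}` as well gives equality.
-/

theorem List.prod_map_mul_of_commute {ι G : Type*} [Monoid G] (l : List ι) {f g : ι → G}
    (hfg : ∀ i j, Commute (g i) (f j)) :
    (l.map fun i => f i * g i).prod = (l.map f).prod * (l.map g).prod := by
  induction l with
  | nil => simp
  | cons j l ih =>
    have hj : Commute (g j) (l.map f).prod :=
      Commute.list_prod_right _ _ fun x hx => by
        obtain ⟨i, -, rfl⟩ := List.mem_map.1 hx
        exact hfg j i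
    simp only [List.map_cons, List.prod_cons, ih, mul_assoc]
    rw [← mul_assoc (g j), hj.eq, mul_assoc]

section Difference

variable {d : ℕ} {M : Type*} [AddCommGroup M]

/-- `ddelta i` viewed in the monoid `Function.End`, where multiplication is composition. -/
noncomputable def ddeltaEnd (i : Fin d) : Function.End ((Fin d → ℤ_[p]) → M) := ddelta i

theorem commute_ddeltaEnd (i j : Fin d) :
    Commute (ddeltaEnd (p := p) (M := M) i) (ddeltaEnd j) := by
  funext f x
  change dshift _ (dshift _ f) x = dshift _ (dshift _ f) x
  simp only [dshift]
  rw [add_right_comm x (Pi.single j 1)]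
  abel

theorem dpow_eq_prod (n : Fin d → ℕ) (f : (Fin d → ℤ_[p]) → M) :
    dpow n f = ((List.finRange d).map fun i => ddeltaEnd i ^ n i).prod f := by
  change (List.finRange d).foldr _ id f = _
  induction List.finRange d generalizing f with
  | nil => rfl
  | cons j l ih => exact congrArg _ (ih f)

theorem dpow_add (m n : Fin d → ℕ) (f : (Fin d → ℤ_[p]) → M) :
    dpow (m + n) f = dpow m (dpow n f) := by
  simp only [dpow_eq_prod, Pi.add_apply, pow_add]
  rw [List.prod_map_mul_of_commute _ fun i j => (commute_ddeltaEnd i j).pow_pow _ _]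
  rfl

theorem dpow_zero (f : (Fin d → ℤ_[p]) → M) : dpow 0 f = f := by
  simp only [dpow_eq_prod, Pi.zero_apply, pow_zero, List.map_const', List.prod_replicate, one_pow]
  rfl

theorem dpow_single_one (i : Fin d) (f : (Fin d → ℤ_[p]) → M) :
    dpow (Pi.single i 1) f = ddelta i f := by
  rw [dpow_eq_prod, List.prod_map_eq_pow_single i _ fun j hj _ => by simp [hj],
    List.count_eq_one_of_mem (List.nodup_finRange d) (List.mem_finRange i),
    Pi.single_eq_same, pow_one, pow_one]
  rfl

theorem dpow_comp_add_left (n : Fin d → ℕ) (z : Fin d → ℤ_[p]) (f : (Fin d → ℤ_[p]) → M) :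
    dpow n (fun x => f (z + x)) = fun x => dpow n f (z + x) := by
  let shift : Function.End ((Fin d → ℤ_[p]) → M) := fun g x => g (z + x)
  have h : Commute shift ((List.finRange d).map fun i => ddeltaEnd i ^ n i).prod := by
    refine Commute.list_prod_right _ _ fun x hx => ?_
    obtain ⟨i, -, rfl⟩ := List.mem_map.1 hx
    have hi : Commute shift (ddeltaEnd i) := by
      funext g x
      change dshift _ g (z + x) = dshift _ (fun y => g (z + y)) x
      simp only [dshift, add_assoc]
    exact hi.pow_right _
  rw [dpow_eq_prod, dpow_eq_prod]
  exact (congrFun h f).symm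

theorem mahlerCoeff_comp_add_left (f : (Fin d → ℤ_[p]) → M) (z : Fin d → ℤ_[p])
    (n : Fin d → ℕ) : mahlerCoeff (fun x => f (z + x)) n = dpow n f z := by
  simp only [mahlerCoeff, dpow_comp_add_left, add_zero]

end Difference

theorem Continuous.dpow {d : ℕ} {M : Type*} [AddCommGroup M] [TopologicalSpace M]
    [ContinuousSub M] {f : (Fin d → ℤ_[p]) → M} (hf : Continuous f) (n : Fin d → ℕ) :
    Continuous (dpow n f) := by
  let S : Submonoid (Function.End ((Fin d → ℤ_[p]) → M)) :=
    { carrier := {T | ∀ g, Continuous g → Continuous (T g)}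
      mul_mem' := fun hS hT g hg => hS _ (hT g hg)
      one_mem' := fun _ hg => hg }
  have hS : ∀ i, ddeltaEnd i ∈ S := fun i g hg =>
    (hg.comp (continuous_id.add continuous_const)).sub hg
  rw [dpow_eq_prod]
  refine S.list_prod_mem (fun T hT => ?_) f hf
  obtain ⟨i, -, rfl⟩ := List.mem_map.1 hT
  exact S.pow_mem (hS i) _

theorem Filter.Eventually.cofinite_forall_ge {α : Type*} [Preorder α] [LocallyFiniteOrderBot α]
    {P : α → Prop} (h : ∀ᶠ a in cofinite, P a) : ∀ᶠ a in cofinite, ∀ b, a ≤ b → P b := by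
  rw [eventually_cofinite] at h ⊢
  refine (h.biUnion fun b _ => Set.finite_Iic b).subset fun a ha => ?_
  push Not at ha
  obtain ⟨b, hab, hb⟩ := ha
  exact Set.mem_biUnion hb hab

section Weights

variable {d : ℕ} {b c : ℝ}

theorem monotone_rpow_mul_sum (hb : 1 ≤ b) (hc : 0 ≤ c) :
    Monotone fun n : Fin d → ℕ => b ^ (c * ∑ i, (n i : ℝ)) :=
  (Real.monotone_rpow_of_base_ge_one hb).comp fun _ _ hmn =>
    mul_le_mul_of_nonneg_left (sum_le_sum fun i _ => Nat.cast_le.2 (hmn i)) hc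

theorem monotone_zpow_sum_floor_mul (hb : 1 ≤ b) (hc : 0 ≤ c) :
    Monotone fun n : Fin d → ℕ => b ^ (∑ i, ⌊c * n i⌋ : ℤ) :=
  (zpow_right_mono₀ hb).comp fun _ _ hmn =>
    sum_le_sum fun i _ => Int.floor_le_floor (mul_le_mul_of_nonneg_left (Nat.cast_le.2 (hmn i)) hc)

end Weights

theorem one_le_natCast_of_prime : (1 : ℝ) ≤ p :=
  Nat.one_le_cast.2 (Fact.out : p.Prime).one_lt.le

section Ultrametric

variable {d : ℕ}

theorem dense_addSubmonoidClosure_range_single :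
    Dense (AddSubmonoid.closure (Set.range fun i : Fin d => Pi.single i (1 : ℤ_[p])) :
      Set (Fin d → ℤ_[p])) := by
  refine (DenseRange.piMap fun _ => PadicInt.denseRange_natCast).mono ?_
  rintro _ ⟨K, rfl⟩
  rw [← Finset.univ_sum_single (Pi.map _ K)]
  refine sum_mem fun i _ => ?_
  rw [show Pi.map (fun _ => (Nat.cast : ℕ → ℤ_[p])) K i = K i • (1 : ℤ_[p]) from
    (nsmul_one _).symm, Pi.single_smul]
  exact nsmul_mem (AddSubmonoid.subset_closure (Set.mem_range_self i)) _

variable {M : Type*} [SeminormedAddCommGroup M] [IsUltrametricDist M] {B : ℝ}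

theorem norm_apply_le_of_mem_addSubmonoidClosure {x : Fin d → ℤ_[p]}
    (hx : x ∈ AddSubmonoid.closure (Set.range fun i : Fin d => Pi.single i (1 : ℤ_[p])))
    (g : (Fin d → ℤ_[p]) → M) (hg : ∀ m, ‖mahlerCoeff g m‖ ≤ B) : ‖g x‖ ≤ B := by
  induction hx using AddSubmonoid.closure_induction_left generalizing g with
  | zero => simpa [mahlerCoeff, dpow_zero] using hg 0
  | add_left _ hy x _ ih =>
    obtain ⟨i, rfl⟩ := hy
    have hstep : g (Pi.single i 1 + x) = g x + ddelta i g x := by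
      simp [ddelta, dshift, add_comm]
    have hdelta : ∀ m, ‖mahlerCoeff (ddelta i g) m‖ ≤ B := fun m => by
      rw [mahlerCoeff, ← dpow_single_one, ← dpow_add]
      exact hg _
    rw [hstep]
    exact (IsUltrametricDist.norm_add_le_max _ _).trans (max_le (ih g hg) (ih _ hdelta))

theorem norm_le_of_forall_norm_mahlerCoeff_le {g : (Fin d → ℤ_[p]) → M} (hg : Continuous g)
    (hB : ∀ m, ‖mahlerCoeff g m‖ ≤ B) (x : Fin d → ℤ_[p]) : ‖g x‖ ≤ B :=
  dense_addSubmonoidClosure_range_single.induction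
    (fun _ hx => norm_apply_le_of_mem_addSubmonoidClosure hx g hB)
    (isClosed_le hg.norm continuous_const) x

theorem norm_mahlerCoeff_comp_add_left_mul_le {f : (Fin d → ℤ_[p]) → M} (hf : Continuous f)
    {w : (Fin d → ℕ) → ℝ} (hw : Monotone w) (hw0 : ∀ n, 0 < w n) {n : Fin d → ℕ}
    (hB : ∀ m, n ≤ m → ‖mahlerCoeff f m‖ * w m ≤ B) (z : Fin d → ℤ_[p]) :
    ‖mahlerCoeff (fun x => f (z + x)) n‖ * w n ≤ B := by
  rw [mahlerCoeff_comp_add_left, ← le_div_iff₀ (hw0 n)]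
  refine norm_le_of_forall_norm_mahlerCoeff_le (hf.dpow n) (fun m => ?_) z
  rw [mahlerCoeff, ← dpow_add, le_div_iff₀ (hw0 n)]
  calc ‖dpow (m + n) f 0‖ * w n ≤ ‖mahlerCoeff f (m + n)‖ * w (m + n) :=
        mul_le_mul_of_nonneg_left (hw le_add_self) (norm_nonneg _)
    _ ≤ B := hB _ le_add_self

theorem tendsto_norm_mahlerCoeff_comp_add_left_mul {f : (Fin d → ℤ_[p]) → M}
    (hf : Continuous f) {w : (Fin d → ℕ) → ℝ} (hw : Monotone w) (hw0 : ∀ n, 0 < w n)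
    (h : Tendsto (fun n => ‖mahlerCoeff f n‖ * w n) cofinite (nhds 0)) (z : Fin d → ℤ_[p]) :
    Tendsto (fun n => ‖mahlerCoeff (fun x => f (z + x)) n‖ * w n) cofinite (nhds 0) := by
  refine tendsto_order.2 ⟨fun a ha => Eventually.of_forall fun n =>
    ha.trans_le (mul_nonneg (norm_nonneg _) (hw0 n).le), fun ε hε => ?_⟩
  filter_upwards [(h.eventually (ge_mem_nhds (half_pos hε))).cofinite_forall_ge] with n hn
  exact (norm_mahlerCoeff_comp_add_left_mul_le hf hw hw0 hn z).trans_lt (half_lt_self hε)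

end Ultrametric

theorem Rlam_comp_add_left_le {d : ℕ} {M : Type*} [NormedAddCommGroup M] [IsUltrametricDist M]
    (lam : ℝ) {f : (Fin d → ℤ_[p]) → M} (hf : Continuous f)
    (z : Fin d → ℤ_[p]) : Rlam p lam (fun x => f (z + x)) ≤ Rlam p lam f := by
  refine iSup_le fun n => ?_
  rcases eq_or_ne (Rlam p lam f) ⊤ with htop | htop
  · exact htop ▸ le_top
  rw [ENNReal.ofReal_le_iff_le_toReal htop]
  have hp := one_le_natCast_of_prime (p := p)
  refine norm_mahlerCoeff_comp_add_left_mul_le hf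
    (monotone_zpow_sum_floor_mul hp (Real.rpow_nonneg (zero_le_one.trans hp) lam))
    (fun _ => zpow_pos (zero_lt_one.trans_le hp) _) (fun m _ => ?_) z
  exact (ENNReal.ofReal_le_iff_le_toReal htop).1 (le_iSup (fun m => ENNReal.ofReal _) m)

theorem stmt8 {d : ℕ} {M : Type*} [NormedAddCommGroup M]
    (hna : ∀ a b : M, ‖a + b‖ ≤ max ‖a‖ ‖b‖)
    (lam : ℝ) (f : (Fin d → ℤ_[p]) → M) (hf : CondLa p lam f) (z : Fin d → ℤ_[p]) :
    CondLa p lam (fun x => f (z + x)) ∧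
      Rlam p lam (fun x => f (z + x)) = Rlam p lam f := by
  have := IsUltrametricDist.isUltrametricDist_of_forall_norm_add_le_max_norm hna
  obtain ⟨hfc, hft⟩ := hf
  have hp := one_le_natCast_of_prime (p := p)
  have hshift : Continuous fun x => f (z + x) := hfc.comp (continuous_const_add z)
  refine ⟨⟨hshift, tendsto_norm_mahlerCoeff_comp_add_left_mul hfc
    (monotone_rpow_mul_sum hp (Real.rpow_nonneg (zero_le_one.trans hp) lam))
    (fun _ => Real.rpow_pos_of_pos (zero_lt_one.trans_le hp) _) hft z⟩,
    le_antisymm (Rlam_comp_add_left_le lam hfc z) ?_⟩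
  simpa using Rlam_comp_add_left_le lam hshift (-z)
end

section
/- Sharp elements that are Galois-smooth tilt to locally analytic elements: let K̂_∞ be a perfectoid field of characteristic 0 with a continuous isometric action of Γ ≅ Z_p, and x ∈ K̂_∞^{♭,+} an element of the tilt with x^♯ fixed by a topological generator γ of Γ. Then for all m ≥ 0, val(γ^{p^m}(x) − x) ≥ p^m · val(p); in particular x is a locally analytic (super-Hölder) vector. -/
/-!
Perfectness gives z with z ^ p ^ m = x, and every γ-conjugate of w = z^♯ is a p^m-th root of
x^♯, which is fixed by all of Γ by continuity. So Γ moves w inside a set of at most p^m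
elements; its stabiliser is open, hence contains some p^N, so the period of w under γ is a power
of p bounded by p^m and γ^{p^m} fixes w. Then z and γ^{p^m}(z) have the same sharp, so they are
congruent modulo p, and raising to the p^m-th power (additive in characteristic p) gives the
bound.
-/

open scoped NNReal
open Function Polynomial

variable {p : ℕ} [Fact p.Prime]

theorem Function.minimalPeriod_le_card_of_iterate_mem {α : Type*} {f : α → α} {x : α}
    {s : Finset α} (hs : ∀ n, f^[n] x ∈ s) : minimalPeriod f x ≤ s.card := by
  calc minimalPeriod f x = (Finset.range (minimalPeriod f x)).card := (Finset.card_range _).symm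
    _ ≤ s.card := Finset.card_le_card_of_injOn (f^[·] x) (fun n _ => hs n)
        (iterate_injOn_Iio_minimalPeriod.mono fun n hn => by simpa using hn)

theorem Function.IsPeriodicPt.of_prime_pow_of_card_le {α : Type*} {f : α → α} {x : α}
    {q N m : ℕ} (hq : q.Prime) (hN : IsPeriodicPt f (q ^ N) x) {s : Finset α}
    (hs : ∀ n, f^[n] x ∈ s) (hcard : s.card ≤ q ^ m) : IsPeriodicPt f (q ^ m) x := by
  obtain ⟨k, -, hk⟩ := (Nat.dvd_prime_pow hq).1 hN.minimalPeriod_dvd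
  have hkm : k ≤ m := (Nat.pow_le_pow_iff_right hq.one_lt).1 <|
    hk ▸ (minimalPeriod_le_card_of_iterate_mem hs).trans hcard
  exact isPeriodicPt_iff_minimalPeriod_dvd.2 (hk ▸ pow_dvd_pow q hkm)

theorem Polynomial.card_nthRootsFinset_le {R : Type*} [CommRing R] [IsDomain R] (n : ℕ) (a : R) :
    (nthRootsFinset n a).card ≤ n := by
  classical
  rw [nthRootsFinset_def]
  exact (Multiset.toFinset_card_le _).trans (card_nthRoots n a)

theorem apply_natCast_eq_iterate {M X : Type*} [AddMonoidWithOne M] {act : M → X → X}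
    (h0 : ∀ y, act 0 y = y) (hadd : ∀ a b y, act (a + b) y = act b (act a y)) (n : ℕ) :
    act n = (act 1)^[n] := by
  induction n with
  | zero => funext y; simp [h0]
  | succ n ih => funext y; rw [Nat.cast_succ, hadd, ih, iterate_succ_apply']

namespace PadicInt

theorem exists_pow_mem_of_mem_nhds {U : Set ℤ_[p]} (hU : U ∈ nhds 0) :
    ∃ N : ℕ, (p : ℤ_[p]) ^ N ∈ U :=
  ((tendsto_pow_atTop_nhds_zero_of_norm_lt_one
    (norm_natCast_lt_one_iff.2 dvd_rfl)).eventually hU).exists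

theorem apply_eq_self_of_apply_one_eq_self {X : Type*} [TopologicalSpace X] [T2Space X]
    {act : ℤ_[p] → X → X} (h0 : ∀ y, act 0 y = y)
    (hadd : ∀ a b y, act (a + b) y = act b (act a y)) {x : X}
    (hcont : Continuous fun a => act a x) (hx : act 1 x = x) (a : ℤ_[p]) : act a x = x := by
  refine congrFun (hcont.ext_on denseRange_natCast continuous_const ?_) a
  rintro _ ⟨n, rfl⟩
  simp only [apply_natCast_eq_iterate h0 hadd, iterate_fixed hx]

theorem exists_apply_pow_eq_self {X : Type*} [TopologicalSpace X] [T1Space X]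
    {act : ℤ_[p] → X → X} (h0 : ∀ y, act 0 y = y) {x : X}
    (hcont : Continuous fun a => act a x) (hfin : (Set.range fun a => act a x).Finite) :
    ∃ N : ℕ, act (p ^ N) x = x := by
  have hopen : IsOpen ((fun a => act a x) ⁻¹' ((Set.range fun a => act a x) \ {x})ᶜ) :=
    hcont.isOpen_preimage _ (hfin.sdiff.isClosed.isOpen_compl)
  obtain ⟨N, hN⟩ := exists_pow_mem_of_mem_nhds (hopen.mem_nhds (by simp [h0]))
  exact ⟨N, by simpa using hN⟩

theorem apply_pow_eq_self_of_apply_pow_eq {K : Type*} [CommRing K] [IsDomain K]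
    [TopologicalSpace K] [T1Space K] {act : ℤ_[p] → K → K} (h0 : ∀ y, act 0 y = y)
    (hadd : ∀ a b y, act (a + b) y = act b (act a y)) {w u : K} {m : ℕ}
    (hcont : Continuous fun a => act a w) (hroot : ∀ a, act a w ^ p ^ m = u) :
    act (p ^ m) w = w := by
  have hp : p.Prime := Fact.out
  have hmem : ∀ a, act a w ∈ nthRootsFinset (p ^ m) u := fun a =>
    (mem_nthRootsFinset (pow_pos hp.pos m) u).2 (hroot a)
  obtain ⟨N, hN⟩ := exists_apply_pow_eq_self h0 hcont
    ((nthRootsFinset (p ^ m) u).finite_toSet.subset (Set.range_subset_iff.2 hmem))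
  have hiter : ∀ n : ℕ, (act 1)^[n] w = act n w := fun n => by
    rw [apply_natCast_eq_iterate h0 hadd]
  have hper : IsPeriodicPt (act 1) (p ^ N) w := by
    rw [IsPeriodicPt, IsFixedPt, hiter]; exact_mod_cast hN
  have := hper.of_prime_pow_of_card_le hp (fun n => hiter n ▸ hmem n)
    (card_nthRootsFinset_le _ u)
  rw [IsPeriodicPt, IsFixedPt, hiter] at this
  exact_mod_cast this

end PadicInt

theorem stmt13_general {K L : Type*} [Field K] [Field L] [CharP L p]
    [TopologicalSpace K] [T2Space K]
    (vK : Valuation K ℝ≥0) (vL : Valuation L ℝ≥0)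
    (actK : ℤ_[p] → K ≃+* K) (actL : ℤ_[p] → L ≃+* L)
    (hK0 : actK 0 = RingEquiv.refl K)
    (hKadd : ∀ a b : ℤ_[p], actK (a + b) = (actK a).trans (actK b))
    (hKcont : ∀ y : K, Continuous fun a : ℤ_[p] => actK a y)
    (hvL : ∀ (a : ℤ_[p]) (y : L), vL (actL a y) = vL y)
    (sharp : L →*₀ K)
    (hsharp_val : ∀ y : L, vK (sharp y) = vL y)
    (hsharp_equiv : ∀ (a : ℤ_[p]) (y : L), sharp (actL a y) = actK a (sharp y))
    (hsharp_mod : ∀ a b : L, vL a ≤ 1 → vL b ≤ 1 →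
      vK (sharp (a - b) - (sharp a - sharp b)) ≤ vK (p : K))
    (hperf : ∀ y : L, ∃ z : L, z ^ p = y)
    (x : L) (hx : vL x ≤ 1)
    (hfix : actK 1 (sharp x) = sharp x) :
    ∀ m : ℕ, vL (actL ((p : ℤ_[p]) ^ m) x - x) ≤ vK (p : K) ^ (p ^ m) := by
  intro m
  have h0 : ∀ y, actK 0 y = y := by simp [hK0]
  have hadd : ∀ a b y, actK (a + b) y = actK b (actK a y) := by simp [hKadd]
  have : PerfectRing L p := PerfectRing.ofSurjective L p hperf
  obtain ⟨z, rfl⟩ := (bijective_iterateFrobenius L p m).2 x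
  rw [iterateFrobenius_def] at hx hfix ⊢
  have hz : vL z ≤ 1 := by
    rwa [map_pow, pow_le_one_iff_of_nonneg zero_le (pow_ne_zero m (Fact.out : p.Prime).ne_zero)]
      at hx
  have hu := PadicInt.apply_eq_self_of_apply_one_eq_self (act := fun a => actK a) h0 hadd
    (hKcont _) hfix
  have hw : actK (p ^ m) (sharp z) = sharp z :=
    PadicInt.apply_pow_eq_self_of_apply_pow_eq (act := fun a => actK a) h0 hadd (hKcont _)
      fun a => by rw [← map_pow, ← map_pow, hu]
  have hsharp : sharp (actL ((p : ℤ_[p]) ^ m) z) = sharp z := by rw [hsharp_equiv, hw]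
  have hkey := hsharp_mod (actL ((p : ℤ_[p]) ^ m) z) z (by rwa [hvL]) hz
  rw [hsharp, sub_self, sub_zero, hsharp_val] at hkey
  calc vL (actL ((p : ℤ_[p]) ^ m) (z ^ p ^ m) - z ^ p ^ m)
      = vL (actL ((p : ℤ_[p]) ^ m) z - z) ^ p ^ m := by
        rw [map_pow, ← sub_pow_char_pow, map_pow]
    _ ≤ vK (p : K) ^ p ^ m := pow_le_pow_left₀ zero_le hkey _

theorem stmt13 {K L : Type*} [Field K] [Field L] [CharP L p]
    [TopologicalSpace K] [T2Space K]
    (vK : Valuation K ℝ≥0) (vL : Valuation L ℝ≥0)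
    (actK : ℤ_[p] → K ≃+* K) (actL : ℤ_[p] → L ≃+* L)
    (hK0 : actK 0 = RingEquiv.refl K)
    (hKadd : ∀ a b : ℤ_[p], actK (a + b) = (actK a).trans (actK b))
    (hL0 : actL 0 = RingEquiv.refl L)
    (hLadd : ∀ a b : ℤ_[p], actL (a + b) = (actL a).trans (actL b))
    (hKcont : ∀ y : K, Continuous fun a : ℤ_[p] => actK a y)
    (hvK : ∀ (a : ℤ_[p]) (y : K), vK (actK a y) = vK y)
    (hvL : ∀ (a : ℤ_[p]) (y : L), vL (actL a y) = vL y)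
    (sharp : L →*₀ K)
    (hsharp_val : ∀ y : L, vK (sharp y) = vL y)
    (hsharp_equiv : ∀ (a : ℤ_[p]) (y : L), sharp (actL a y) = actK a (sharp y))
    (hsharp_mod : ∀ a b : L, vL a ≤ 1 → vL b ≤ 1 →
      vK (sharp (a - b) - (sharp a - sharp b)) ≤ vK (p : K))
    (hperf : ∀ y : L, ∃ z : L, z ^ p = y)
    (x : L) (hx : vL x ≤ 1)
    (hfix : actK 1 (sharp x) = sharp x) :
    ∀ m : ℕ, vL (actL ((p : ℤ_[p]) ^ m) x - x) ≤ vK (p : K) ^ (p ^ m) :=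
  stmt13_general vK vL actK actL hK0 hKadd hKcont hvL sharp hsharp_val hsharp_equiv hsharp_mod hperf
    x hx hfix
end

section
/- For a ∈ 1 + pZ_p acting on F = the fraction field completion of Z_p[[T]] by (a·f)(T) = f((1+T)^a − 1), and for any k ∈ Z, one has val((a−1)(T^k)) ≥ val(T^k) + c for a positive constant c = min(val(p), val(T)); i.e., (a−1)(T^k) = T^k · ((a + Σ_{m≥1} binom(a, m+1) T^m)^k − 1) and the second factor has positive valuation. -/
/- STATEMENT 18: for a ∈ 1 + pℤ_p acting on the fraction field of completed power
series by f(T) ↦ f((1+T)^a - 1), and any k ∈ ℤ,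
val((a-1)(T^k)) ≥ val(T^k) + min(val p, val T).  We work in Laurent series over ℚ_p;
(1+T)^a = Σ_m binom(a,m) T^m, so (a-1)(T^k) = ((1+T)^a - 1)^k - T^k.  The valuation
is encoded multiplicatively by V_ρ(Σ c_i T^i) = sup_i ‖c_i‖·ρ^i with 0 < ρ < 1
(ρ = p^{-val T}); the claimed bound reads
V_ρ(((1+T)^a - 1)^k - T^k) ≤ max(ρ, p^{-1}) · V_ρ(T^k). -/

open scoped ENNReal NNReal

variable {p : ℕ} [Fact p.Prime]

/-- `binom(a, n) ∈ ℚ_p` for `a ∈ ℤ_p`. -/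
noncomputable def qchoose (a : ℤ_[p]) (n : ℕ) : ℚ_[p] :=
  (∏ i ∈ Finset.range n, ((a : ℚ_[p]) - (i : ℚ_[p]))) / (n.factorial : ℚ_[p])

/-- The binomial series `(1+T)^a = Σ_m binom(a,m) T^m` as a Laurent series. -/
noncomputable def binomSeries (a : ℤ_[p]) : LaurentSeries ℚ_[p] :=
  HahnSeries.ofPowerSeries ℤ ℚ_[p] (PowerSeries.mk fun m => qchoose a m)

/-- The variable `T` as a Laurent series. -/
noncomputable def Tvar (p : ℕ) [Fact p.Prime] : LaurentSeries ℚ_[p] :=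
  HahnSeries.single 1 1

/-- The multiplicative avatar `V_ρ(f) = sup_i ‖f_i‖ ρ^i` of the valuation
`val(Σ c_i T^i) = inf_i (val_p(c_i) + i·val(T))`, with `ρ = p^{-val T}`. -/
noncomputable def Vval (ρ : ℝ≥0∞) (f : LaurentSeries ℚ_[p]) : ℝ≥0∞ :=
  ⨆ i : ℤ, (‖f.coeff i‖₊ : ℝ≥0∞) * ρ ^ i

/-! `(1 + T)^a - 1 = T·w` with `w = Σ_m binom(a, m+1) T^m`, whose coefficients are integral since
`ℤ_p` is a binomial ring, and whose constant term `a ≡ 1 mod p` makes it a unit of `ℤ_p⟦T⟧`.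
Hence `((1 + T)^a - 1)^k - T^k = T^k (w^k - 1)`, where `w^k - 1` is integral with constant term
`≡ 0 mod p`. Its Gauss norm `V_ρ` is therefore at most `max(ρ, 1/p)`, and `V_ρ(T^k g) = ρ^k V_ρ(g)`. -/

open PowerSeries

lemma map_units_zpow {M N F : Type*} [Monoid M] [DivisionMonoid N] [FunLike F M N]
    [MonoidHomClass F M N] (f : F) (u : Mˣ) (k : ℤ) : f ↑(u ^ k) = f u ^ k := by
  have h := congrArg Units.val (map_zpow (Units.map (f : M →* N)) u k)
  rwa [Units.val_zpow_eq_zpow_val, Units.coe_map, Units.coe_map] at h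

section BinomialDivX

variable {R : Type*} [CommRing R] [BinomialRing R]

/-- The power series `((1 + X) ^ a - 1) / X`. -/
noncomputable def binomialDivX (a : R) : R⟦X⟧ :=
  mk fun n => Ring.choose a (n + 1)

lemma constantCoeff_binomialDivX (a : R) : constantCoeff (binomialDivX a) = a := by
  simp [binomialDivX, ← coeff_zero_eq_constantCoeff_apply]

lemma binomialSeries_sub_one (a : R) : binomialSeries R a - 1 = X * binomialDivX a := by
  ext (_ | n)
  · simp
  · simp [binomialDivX, coeff_succ_X_mul]

end BinomialDivX

lemma PadicInt.isUnit_of_toZMod_ne_zero {x : ℤ_[p]} (hx : PadicInt.toZMod x ≠ 0) : IsUnit x := by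
  rwa [← IsLocalRing.notMem_maximalIdeal, ← PadicInt.ker_toZMod, RingHom.mem_ker]

lemma PadicInt.norm_le_inv_p_of_toZMod_eq_zero {x : ℤ_[p]} (hx : PadicInt.toZMod x = 0) :
    ‖x‖ ≤ (p : ℝ)⁻¹ := by
  rw [← RingHom.mem_ker, PadicInt.ker_toZMod, PadicInt.maximalIdeal_eq_span_p,
    Ideal.mem_span_singleton, ← PadicInt.norm_lt_one_iff_dvd] at hx
  simpa using (PadicInt.norm_le_pow_iff_norm_lt_pow_add_one x (-1)).2 (by simpa using hx)

lemma PadicInt.coe_nnnorm_le_ofReal {x : ℤ_[p]} {r : ℝ} (h : ‖x‖ ≤ r) :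
    (‖(x : ℚ_[p])‖₊ : ℝ≥0∞) ≤ ENNReal.ofReal r := by
  show (‖x‖₊ : ℝ≥0∞) ≤ _
  rw [← enorm_eq_nnnorm, ← ofReal_norm]
  exact ENNReal.ofReal_le_ofReal h

lemma qchoose_eq_choose (a : ℤ_[p]) (n : ℕ) :
    qchoose a n = ((Ring.choose a n : ℤ_[p]) : ℚ_[p]) := by
  have h := congrArg PadicInt.Coe.ringHom (Ring.descPochhammer_eq_factorial_smul_choose a n)
  rw [← Polynomial.aeval_eq_smeval, ← Polynomial.eval_map_algebraMap, descPochhammer_map,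
    descPochhammer_eval_eq_prod_range, nsmul_eq_mul] at h
  simp only [map_prod, map_sub, map_mul, map_natCast] at h
  rw [qchoose, div_eq_iff (by exact_mod_cast n.factorial_ne_zero), mul_comm]
  exact h

noncomputable def toLaurentSeries : ℤ_[p]⟦X⟧ →+* LaurentSeries ℚ_[p] :=
  (HahnSeries.ofPowerSeries ℤ ℚ_[p]).comp (PowerSeries.map PadicInt.Coe.ringHom)

lemma coeff_toLaurentSeries (f : ℤ_[p]⟦X⟧) (i : ℤ) :
    (toLaurentSeries f).coeff i = if i < 0 then 0 else ((coeff i.natAbs f : ℤ_[p]) : ℚ_[p]) :=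
  PowerSeries.coeff_coe _ i

lemma binomSeries_eq_toLaurentSeries (a : ℤ_[p]) :
    binomSeries a = toLaurentSeries (binomialSeries ℤ_[p] a) := by
  show HahnSeries.ofPowerSeries ℤ ℚ_[p] _ = HahnSeries.ofPowerSeries ℤ ℚ_[p] _
  congr 1
  ext n
  rw [coeff_mk, coeff_map, binomialSeries_coeff, smul_eq_mul, mul_one, qchoose_eq_choose]
  rfl

lemma binomSeries_sub_one (a : ℤ_[p]) :
    binomSeries a - 1 = Tvar p * toLaurentSeries (binomialDivX a) := by
  rw [binomSeries_eq_toLaurentSeries, ← map_one toLaurentSeries, ← map_sub,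
    binomialSeries_sub_one, map_mul]
  congr 1
  simp [toLaurentSeries, Tvar]

lemma Tvar_zpow (k : ℤ) : Tvar p ^ k = HahnSeries.single k 1 :=
  (RatFunc.single_zpow k).symm

section Vval

variable {ρ : ℝ≥0∞}

lemma Vval_single (k : ℤ) (c : ℚ_[p]) : Vval ρ (HahnSeries.single k c) = ‖c‖₊ * ρ ^ k := by
  refine le_antisymm (iSup_le fun i => ?_) (le_iSup_of_le k (by simp))
  rcases eq_or_ne i k with rfl | hik
  · simp
  · simp [HahnSeries.coeff_single_of_ne hik]

lemma Vval_single_mul (hρ0 : ρ ≠ 0) (hρt : ρ ≠ ⊤) (k : ℤ) (c : ℚ_[p])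
    (f : LaurentSeries ℚ_[p]) :
    Vval ρ (HahnSeries.single k c * f) = ‖c‖₊ * ρ ^ k * Vval ρ f := by
  rw [Vval, Vval, ENNReal.mul_iSup, ← (Equiv.addRight k).iSup_comp]
  refine iSup_congr fun i => ?_
  simp only [Equiv.coe_addRight, HahnSeries.coeff_single_mul_add, nnnorm_mul, ENNReal.coe_mul,
    ENNReal.zpow_add hρ0 hρt]
  ring

lemma Vval_toLaurentSeries_le (hρ : ρ ≤ 1) {f : ℤ_[p]⟦X⟧}
    (hf : ‖constantCoeff f‖ ≤ (p : ℝ)⁻¹) : Vval ρ (toLaurentSeries f) ≤ max ρ (p : ℝ≥0∞)⁻¹ := by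
  refine iSup_le fun i => ?_
  rcases lt_or_ge i 0 with hi | hi
  · simp [coeff_toLaurentSeries, hi]
  lift i to ℕ using hi with n
  rw [coeff_toLaurentSeries, if_neg (by omega), Int.natAbs_natCast, zpow_natCast]
  rcases n with _ | n
  · refine le_max_of_le_right ?_
    have hp : (0 : ℝ) < p := by exact_mod_cast (Fact.out : p.Prime).pos
    rw [pow_zero, mul_one, ← ENNReal.ofReal_natCast, ← ENNReal.ofReal_inv_of_pos hp]
    exact PadicInt.coe_nnnorm_le_ofReal (by rwa [coeff_zero_eq_constantCoeff_apply])
  · refine le_max_of_le_left ?_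
    calc (‖((coeff (n + 1) f : ℤ_[p]) : ℚ_[p])‖₊ : ℝ≥0∞) * ρ ^ (n + 1) ≤ 1 * ρ ^ (n + 1) := by
          gcongr
          simpa using PadicInt.coe_nnnorm_le_ofReal (PadicInt.norm_le_one _)
      _ ≤ ρ := by rw [one_mul]; exact pow_le_of_le_one zero_le hρ n.succ_ne_zero

end Vval

theorem stmt18 (a : ℤ_[p]) (ha : ∃ b : ℤ_[p], a = 1 + p * b)
    (ρ : ℝ≥0∞) (hρ0 : 0 < ρ) (hρ1 : ρ < 1) (k : ℤ) :
    Vval ρ ((binomSeries a - 1) ^ k - Tvar p ^ k) ≤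
      max ρ (((p : ℝ≥0∞))⁻¹) * Vval ρ (Tvar p ^ k) := by
  obtain ⟨b, hab⟩ := ha
  set ψ : ℤ_[p]⟦X⟧ →+* ZMod p := PadicInt.toZMod.comp constantCoeff
  have hψ : ψ (binomialDivX a) = 1 := by
    simp [ψ, constantCoeff_binomialDivX, hab]
  obtain ⟨W, hW⟩ : IsUnit (binomialDivX a) :=
    isUnit_iff_constantCoeff.2 (PadicInt.isUnit_of_toZMod_ne_zero (ne_of_eq_of_ne hψ one_ne_zero))
  have hWk : ψ (↑(W ^ k) - 1) = 0 := by
    rw [map_sub, map_one, map_units_zpow, hW, hψ, one_zpow, sub_self]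
  have hfac : (binomSeries a - 1) ^ k - Tvar p ^ k
      = HahnSeries.single k 1 * toLaurentSeries (↑(W ^ k) - 1) := by
    rw [binomSeries_sub_one, ← hW, mul_zpow, Tvar_zpow, map_sub toLaurentSeries,
      map_one toLaurentSeries, map_units_zpow, mul_sub, mul_one]
  rw [hfac, Tvar_zpow, Vval_single_mul hρ0.ne' hρ1.ne_top, Vval_single, mul_comm]
  gcongr
  exact Vval_toLaurentSeries_le hρ1.le (PadicInt.norm_le_inv_p_of_toZMod_eq_zero hWk)
end
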